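/- Fix n, u, c, m : ℕ and e := u + c. Let N a : Matrix (Fin e) (Fin u) ℝ and C0 : Matrix (Fin c) (Fin e) ℝ be constant matrices, and let M a : Matrix (Fin m) (Fin c) ℝ, for a ∈ Fin (n+1), be constant matrices with M 0 = 0 and (M a) * C0 * (N b) + (M b) * C0 * (N a) = 0 for all a, b. For every twice continuously differentiable φ : (Fin (n+1) → ℝ) → (Fin u → ℝ), setting E x := ∑ b, (N b).mulVec (∂_b φ x) and ψ x := C0.mulVec (E x), the constraints of the constraints hold identically (off-shell): for every x, ∑ i ∈ Finset.univ \ {0}, (M i).mulVec (∂_i ψ x) = 0. -/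

import Mathlib

/-!
Writing `ψ = ∑_b C0 N_b ∂_b φ`, the combination `∑_i M_i ∂_i ψ` is `∑_{i,b} M_i C0 N_b ∂_i ∂_b φ`
(the term `i = 0` vanishes since `M 0 = 0`). The coefficients are antisymmetric in `(i, b)` while
the second derivatives of the `C²` field `φ` are symmetric, so the double sum cancels.
-/

open Matrix

theorem Matrix.sum_sum_mulVec_eq_zero_of_antisymm_of_symm {ι m k R : Type*} [Fintype ι]
    [Fintype k] [Semiring R] [NoZeroDivisors R] [CharZero R]
    (A : ι → ι → Matrix m k R) (hA : ∀ i j, A i j + A j i = 0)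
    (v : ι → ι → k → R) (hv : ∀ i j, v i j = v j i) :
    ∑ i, ∑ j, A i j *ᵥ v i j = 0 := by
  set T := ∑ i, ∑ j, A i j *ᵥ v i j with hT
  have hswap : T = ∑ i, ∑ j, A j i *ᵥ v i j := by
    rw [hT, Finset.sum_comm]
    simp only [hv]
  have hdouble : T + T = 0 := by
    nth_rewrite 2 [hswap]
    simp only [hT, ← Finset.sum_add_distrib, ← add_mulVec, hA, zero_mulVec, Finset.sum_const_zero]
  funext l
  exact add_self_eq_zero.mp (congrFun hdouble l)

theorem HasFDerivAt.const_mulVec {𝕜 E m k : Type*} [NontriviallyNormedField 𝕜] [CompleteSpace 𝕜]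
    [NormedAddCommGroup E] [NormedSpace 𝕜 E] [Fintype m] [Fintype k]
    (A : Matrix m k 𝕜) {f : E → k → 𝕜} {f' : E →L[𝕜] k → 𝕜} {x : E} (hf : HasFDerivAt f f' x) :
    HasFDerivAt (fun y => A *ᵥ f y) (A.mulVecLin.toContinuousLinearMap.comp f') x :=
  A.mulVecLin.toContinuousLinearMap.hasFDerivAt.comp x hf

theorem fderiv_sum_mulVec_fderiv_apply {𝕜 E ι m k : Type*} [NontriviallyNormedField 𝕜]
    [CompleteSpace 𝕜] [NormedAddCommGroup E] [NormedSpace 𝕜 E] [Fintype ι] [Fintype m] [Fintype k]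
    (A : ι → Matrix m k 𝕜) (e : ι → E) {φ : E → k → 𝕜} {x : E}
    (hφ : DifferentiableAt 𝕜 (fderiv 𝕜 φ) x) (v : E) :
    fderiv 𝕜 (fun y => ∑ b, A b *ᵥ fderiv 𝕜 φ y (e b)) x v
      = ∑ b, A b *ᵥ fderiv 𝕜 (fderiv 𝕜 φ) x v (e b) := by
  have hpartial : ∀ b, HasFDerivAt (fun y => fderiv 𝕜 φ y (e b))
      ((fderiv 𝕜 (fderiv 𝕜 φ) x).flip (e b)) x :=
    fun b => hφ.hasFDerivAt.clm_apply (hasFDerivAt_const _ _) |>.congr_fderiv (by ext; simp)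
  rw [fderiv_fun_sum fun b _ => ((hpartial b).const_mulVec (A b)).differentiableAt,
    _root_.sum_apply]
  exact Finset.sum_congr rfl fun b _ => by rw [((hpartial b).const_mulVec (A b)).fderiv]; rfl

/-- Constant-coefficient constraints of the constraints: the extra Geroch fields `M`
give identically vanishing spatial combinations of derivatives of the constraints. -/
theorem stmt_6 (n u c m : ℕ)
    (N : Fin (n + 1) → Matrix (Fin (u + c)) (Fin u) ℝ)
    (C0 : Matrix (Fin c) (Fin (u + c)) ℝ)
    (M : Fin (n + 1) → Matrix (Fin m) (Fin c) ℝ)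
    (hM0 : M 0 = 0)
    (hMsym : ∀ a b, M a * C0 * N b + M b * C0 * N a = 0)
    (φ : (Fin (n + 1) → ℝ) → (Fin u → ℝ))
    (hφ : ContDiff ℝ 2 φ)
    (E : (Fin (n + 1) → ℝ) → (Fin (u + c) → ℝ))
    (hE : ∀ x, E x = ∑ b, (N b).mulVec (fderiv ℝ φ x (Pi.single b 1)))
    (ψ : (Fin (n + 1) → ℝ) → (Fin c → ℝ))
    (hψ : ∀ x, ψ x = C0.mulVec (E x)) :
    ∀ x, ∑ i ∈ Finset.univ \ {0}, (M i).mulVec (fderiv ℝ ψ x (Pi.single i 1)) = 0 := by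
  intro x
  set e : Fin (n + 1) → Fin (n + 1) → ℝ := fun a => Pi.single a 1
  have hψ_eq : ψ = fun y => ∑ b, (C0 * N b) *ᵥ fderiv ℝ φ y (e b) := by
    funext y
    simp only [hψ, hE, mulVec_sum, mulVec_mulVec, e]
  have hφ' : DifferentiableAt ℝ (fderiv ℝ φ) x :=
    (hφ.fderiv_right le_rfl).differentiable one_ne_zero x
  calc ∑ i ∈ Finset.univ \ {0}, M i *ᵥ fderiv ℝ ψ x (e i)
      = ∑ i, M i *ᵥ fderiv ℝ ψ x (e i) :=
        Finset.sum_subset Finset.sdiff_subset fun i _ hi => by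
          simp [show i = 0 by simpa using hi, hM0]
    _ = ∑ i, ∑ b, (M i * C0 * N b) *ᵥ fderiv ℝ (fderiv ℝ φ) x (e i) (e b) := by
        simp only [hψ_eq, fderiv_sum_mulVec_fderiv_apply _ _ hφ', mulVec_sum, mulVec_mulVec,
          Matrix.mul_assoc]
    _ = 0 := sum_sum_mulVec_eq_zero_of_antisymm_of_symm _ hMsym _ fun i b =>
        (hφ.contDiffAt.isSymmSndFDerivAt (by simp)).eq _ _
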